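/- arXiv:2304.01800 — 4 statements merged into one kernel-verified Lean document; each statement's English description precedes it below -/
import Mathlib

section
/- Let n : ℕ, let z₀, z₁ : Fin n → ZMod 2 with z₀ ≠ z₁, and let b : ZMod 2. Define the amplitude function a : (Fin n → ZMod 2) → ℂ by a(d) := (Real.sqrt (2^(n+1)))⁻¹ · ((−1)^((d·z₀).val) + (−1)^(((b + d·z₁)).val)). Then ∑ over all d with d·(z₀ + z₁) = b of ‖a d‖² = 1. (Thus measuring the normalized ciphertext state 2^{-1/2}(|z₀⟩ + (−1)^b |z₁⟩) in the Hadamard basis yields, with probability 1, an outcome d satisfying b = d·(z₀ ⊕ z₁); this is the correctness of the QPKE decryption.) -/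
/-- Correctness of QPKE decryption: the Hadamard-basis measurement outcome `d`
satisfies `d·(z₀ ⊕ z₁) = b` with probability 1. -/
theorem stmt2 (n : ℕ) (z₀ z₁ : Fin n → ZMod 2) (hz : z₀ ≠ z₁) (b : ZMod 2)
    (a : (Fin n → ZMod 2) → ℂ)
    (ha : ∀ d, a d = ((Real.sqrt (2 ^ (n + 1)) : ℝ) : ℂ)⁻¹ *
      ((-1 : ℂ) ^ (∑ i, d i * z₀ i).val + (-1 : ℂ) ^ (b + ∑ i, d i * z₁ i).val)) :
    ∑ d ∈ Finset.univ.filter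
        (fun d : Fin n → ZMod 2 => ∑ i, d i * (z₀ i + z₁ i) = b),
      ‖a d‖ ^ 2 = 1 := by
  classical
  have h2 : ∀ x : ZMod 2, x + x = 0 := by decide
  obtain ⟨i₀, hi₀⟩ : ∃ i, z₀ i ≠ z₁ i := by
    by_contra h; push_neg at h; exact hz (funext h)
  have hw : z₀ i₀ + z₁ i₀ = 1 := by
    revert hi₀; generalize z₀ i₀ = x; generalize z₁ i₀ = y; revert x y; decide
  set S : ZMod 2 → Finset (Fin n → ZMod 2) :=
    fun c => Finset.univ.filter (fun d => ∑ i, d i * (z₀ i + z₁ i) = c) with hS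
  have key : ∀ d : Fin n → ZMod 2,
      ∑ i, (d + Pi.single i₀ (1 : ZMod 2) : Fin n → ZMod 2) i * (z₀ i + z₁ i)
        = (∑ i, d i * (z₀ i + z₁ i)) + 1 := by
    intro d
    have : ∑ i, (d + Pi.single i₀ (1 : ZMod 2) : Fin n → ZMod 2) i * (z₀ i + z₁ i)
        = (∑ i, d i * (z₀ i + z₁ i)) + ∑ i, (Pi.single i₀ 1 : Fin n → ZMod 2) i * (z₀ i + z₁ i) := by
      rw [← Finset.sum_add_distrib]
      exact Finset.sum_congr rfl (fun i _ => by simp [add_mul])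
    rw [this]; congr 1
    rw [Finset.sum_eq_single i₀]
    · simp [hw]
    · intro j _ hj; simp [Pi.single_eq_of_ne hj]
    · simp
  have hinv : ∀ d : Fin n → ZMod 2, d + Pi.single i₀ 1 + Pi.single i₀ 1 = d := by
    intro d; funext i
    by_cases hi : i = i₀
    · subst hi; simp [add_assoc, h2]
    · simp [Pi.single_eq_of_ne hi]
  have hcard : ∀ c : ZMod 2, (S c).card = (S (c + 1)).card := by
    intro c
    apply Finset.card_bij (fun d _ => d + Pi.single i₀ 1)
    · intro d hd
      simp only [hS, Finset.mem_filter, Finset.mem_univ, true_and] at hd ⊢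
      rw [key, hd]
    · intro x _ y _ hxy
      have := congrArg (· + Pi.single i₀ (1 : ZMod 2)) hxy
      simpa [hinv] using this
    · intro d hd
      refine ⟨d + Pi.single i₀ 1, ?_, (hinv d).symm ▸ rfl⟩
      simp only [hS, Finset.mem_filter, Finset.mem_univ, true_and] at hd ⊢
      rw [key, hd, add_assoc, h2, add_zero]
  have hpart : (S b).card + (S (b + 1)).card = 2 ^ n := by
    have hiff : ∀ x y : ZMod 2, (x = y + 1) ↔ ¬ (x = y) := by decide
    have : S (b + 1) = Finset.univ.filter (fun d => ¬ (∑ i, d i * (z₀ i + z₁ i) = b)) := by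
      simp only [hS]
      exact Finset.filter_congr (fun d _ => by rw [hiff])
    rw [this, Finset.card_filter_add_card_filter_not]
    simp [Fintype.card_fun]
  have hcardSb : 2 * (S b).card = 2 ^ n := by
    rw [two_mul]; nth_rewrite 2 [hcard b]; exact hpart
  -- value of ‖a d‖^2 on S b
  have hval : ∀ d ∈ S b, ‖a d‖ ^ 2 = 4 / 2 ^ (n + 1) := by
    intro d hd
    simp only [hS, Finset.mem_filter, Finset.mem_univ, true_and] at hd
    have hsum : (∑ i, d i * z₀ i) + ∑ i, d i * z₁ i = b := by
      calc (∑ i, d i * z₀ i) + ∑ i, d i * z₁ i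
          = ∑ i, d i * (z₀ i + z₁ i) := by
            rw [← Finset.sum_add_distrib]
            exact Finset.sum_congr rfl (fun i _ => by ring)
        _ = b := hd
    have heq : b + ∑ i, d i * z₁ i = ∑ i, d i * z₀ i := by
      rw [← hsum, add_assoc, h2, add_zero]
    rw [ha d, heq]
    have hpos : (0:ℝ) < Real.sqrt (2 ^ (n + 1)) := Real.sqrt_pos.2 (by positivity)
    have : ‖((Real.sqrt (2 ^ (n + 1)) : ℝ) : ℂ)⁻¹ *
        ((-1 : ℂ) ^ (∑ i, d i * z₀ i).val + (-1 : ℂ) ^ (∑ i, d i * z₀ i).val)‖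
        = (Real.sqrt (2 ^ (n + 1)))⁻¹ * 2 := by
      rw [norm_mul]
      congr 1
      · rw [norm_inv, Complex.norm_real, Real.norm_eq_abs, abs_of_pos hpos]
      · rw [← two_mul, norm_mul]
        simp
    rw [this, mul_pow, inv_pow, Real.sq_sqrt (by positivity)]
    norm_num
    ring
  rw [Finset.sum_congr rfl hval, Finset.sum_const, nsmul_eq_mul]
  have hc : ((S b).card : ℝ) * 2 = 2 ^ n := by
    exact_mod_cast (mul_comm 2 (S b).card ▸ hcardSb)
  rw [pow_succ]
  field_simp
  linarith [hc]
end

section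
/- Let K be an inner product space over ℂ and let E := K × K carry the ℓ²-product inner product. Define Z : E → E by Z(x,y) := (x,−y), let V : E ≃ₗᵢ[ℂ] E be a linear isometry equivalence, and set W := V.symm ∘ Z ∘ V. Let ψ₀, ψ₁ ∈ E, let c₀, c₁ ∈ ℂ with ‖c₀‖ ≤ 1 and ‖c₁‖ ≤ 1, let p, Δ : ℝ with 0 ≤ p ≤ 1, 0 ≤ p − Δ and p − Δ ≤ 1, and let ν₀, ν₁, ξ₀, ξ₁ ∈ K be unit vectors. Assume V(c₀•ψ₀ + c₁•ψ₁) = (Real.sqrt (1−p) • ν₀, Real.sqrt p • ν₁) and V(c₀•ψ₀ − c₁•ψ₁) = (Real.sqrt (1−p+Δ) • ξ₀, Real.sqrt (p−Δ) • ξ₁). Then ‖c₁ · ⟪ψ₀, W ψ₁⟫‖ + ‖c₀ · ⟪ψ₁, W ψ₀⟫‖ ≥ |Δ|. (This is the exact duality between distinguishing and swapping: if a measurement following V distinguishes the two superposition states c₀ψ₀ ± c₁ψ₁ with advantage Δ, then the conjugated operator W = V†ZV 'swaps' ψ₀ and ψ₁ with total overlap at least |Δ|.) -/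
/-!
Write `φ± = c₀ • ψ₀ ± c₁ • ψ₁`. Since `V` is unitary, `⟪φ±, W φ±⟫ = ⟪V φ±, Z (V φ±)⟫`, which is
the difference of the squared norms of the two components of `V φ±`: `(1 - p) - p` and
`(1 - p + Δ) - (p - Δ)`. By sesquilinearity the difference `-2Δ` of these two expectations is
`2 (c̄₀ c₁ ⟪ψ₀, W ψ₁⟫ + c̄₁ c₀ ⟪ψ₁, W ψ₀⟫)`, and `‖c₀‖, ‖c₁‖ ≤ 1` gives the bound.
-/

open scoped InnerProductSpace ComplexConjugate
open WithLp

section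

variable {𝕜 E : Type*} [RCLike 𝕜] [NormedAddCommGroup E] [InnerProductSpace 𝕜 E]

theorem inner_add_map_add_sub_inner_sub_map_sub (T : E →ₗ[𝕜] E) (a b : E) :
    ⟪a + b, T (a + b)⟫_𝕜 - ⟪a - b, T (a - b)⟫_𝕜 = 2 * (⟪a, T b⟫_𝕜 + ⟪b, T a⟫_𝕜) := by
  simp only [map_add, map_sub, inner_add_left, inner_add_right, inner_sub_left, inner_sub_right]
  ring

theorem norm_inner_add_map_add_sub_inner_sub_map_sub_le (T : E →ₗ[𝕜] E) {c₀ c₁ : 𝕜}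
    (hc₀ : ‖c₀‖ ≤ 1) (hc₁ : ‖c₁‖ ≤ 1) (ψ₀ ψ₁ : E) :
    ‖⟪c₀ • ψ₀ + c₁ • ψ₁, T (c₀ • ψ₀ + c₁ • ψ₁)⟫_𝕜 - ⟪c₀ • ψ₀ - c₁ • ψ₁, T (c₀ • ψ₀ - c₁ • ψ₁)⟫_𝕜‖
      ≤ 2 * (‖c₁ * ⟪ψ₀, T ψ₁⟫_𝕜‖ + ‖c₀ * ⟪ψ₁, T ψ₀⟫_𝕜‖) := by
  have norm_conj_mul_le {c : 𝕜} (hc : ‖c‖ ≤ 1) (z : 𝕜) : ‖conj c * z‖ ≤ ‖z‖ := by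
    rw [norm_mul, RCLike.norm_conj]
    exact mul_le_of_le_one_left (norm_nonneg z) hc
  rw [inner_add_map_add_sub_inner_sub_map_sub, norm_mul, RCLike.norm_two]
  simp only [map_smul, inner_smul_left]
  simp only [inner_smul_right]
  gcongr
  exact (norm_add_le _ _).trans (add_le_add (norm_conj_mul_le hc₀ _) (norm_conj_mul_le hc₁ _))

end

theorem norm_sqrt_smul_sq {K : Type*} [NormedAddCommGroup K] [NormedSpace ℝ K] {s : ℝ}
    (hs : 0 ≤ s) {ν : K} (hν : ‖ν‖ = 1) : ‖√s • ν‖ ^ 2 = s := by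
  rw [norm_smul, hν, mul_one, Real.norm_of_nonneg (Real.sqrt_nonneg s), Real.sq_sqrt hs]

section PauliZ

variable (𝕜 K : Type*) [RCLike 𝕜] [NormedAddCommGroup K] [InnerProductSpace 𝕜 K]

noncomputable def pauliZ : WithLp 2 (K × K) →ₗ[𝕜] WithLp 2 (K × K) :=
  (WithLp.linearEquiv 2 𝕜 (K × K)).symm.toLinearMap ∘ₗ (LinearMap.id.prodMap (-LinearMap.id)) ∘ₗ
    (WithLp.linearEquiv 2 𝕜 (K × K)).toLinearMap

variable {𝕜 K}

theorem pauliZ_apply (v : WithLp 2 (K × K)) : pauliZ 𝕜 K v = toLp 2 (v.fst, -v.snd) := rfl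

theorem inner_pauliZ_self (v : WithLp 2 (K × K)) :
    ⟪v, pauliZ 𝕜 K v⟫_𝕜 = ((‖v.fst‖ ^ 2 - ‖v.snd‖ ^ 2 : ℝ) : 𝕜) := by
  simp [pauliZ_apply, inner_self_eq_norm_sq_to_K, sub_eq_add_neg]

theorem inner_pauliZ_self_toLp {a b : K} {s t : ℝ} (ha : ‖a‖ ^ 2 = s) (hb : ‖b‖ ^ 2 = t) :
    ⟪toLp 2 (a, b), pauliZ 𝕜 K (toLp 2 (a, b))⟫_𝕜 = ((s - t : ℝ) : 𝕜) := by
  rw [inner_pauliZ_self, toLp_fst, toLp_snd, ha, hb]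

end PauliZ

/-- Duality between distinguishing and swapping: if a measurement following the unitary `V`
distinguishes `c₀ψ₀ ± c₁ψ₁` with advantage `Δ`, then `W = V† Z V` swaps `ψ₀` and `ψ₁`
with total overlap at least `|Δ|`. -/
theorem stmt5 {K : Type*} [NormedAddCommGroup K] [InnerProductSpace ℂ K]
    (Z : WithLp 2 (K × K) → WithLp 2 (K × K))
    (hZ : ∀ v, Z v = (WithLp.equiv 2 (K × K)).symm
      (((WithLp.equiv 2 (K × K)) v).1, -((WithLp.equiv 2 (K × K)) v).2))
    (V : WithLp 2 (K × K) ≃ₗᵢ[ℂ] WithLp 2 (K × K))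
    (W : WithLp 2 (K × K) → WithLp 2 (K × K)) (hW : W = V.symm ∘ Z ∘ V)
    (ψ₀ ψ₁ : WithLp 2 (K × K)) (c₀ c₁ : ℂ) (hc₀ : ‖c₀‖ ≤ 1) (hc₁ : ‖c₁‖ ≤ 1)
    (p Δ : ℝ) (hp0 : 0 ≤ p) (hp1 : p ≤ 1) (hpΔ0 : 0 ≤ p - Δ) (hpΔ1 : p - Δ ≤ 1)
    (ν₀ ν₁ ξ₀ ξ₁ : K) (hν₀ : ‖ν₀‖ = 1) (hν₁ : ‖ν₁‖ = 1) (hξ₀ : ‖ξ₀‖ = 1) (hξ₁ : ‖ξ₁‖ = 1)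
    (hVp : V (c₀ • ψ₀ + c₁ • ψ₁) = (WithLp.equiv 2 (K × K)).symm
      (Real.sqrt (1 - p) • ν₀, Real.sqrt p • ν₁))
    (hVm : V (c₀ • ψ₀ - c₁ • ψ₁) = (WithLp.equiv 2 (K × K)).symm
      (Real.sqrt (1 - p + Δ) • ξ₀, Real.sqrt (p - Δ) • ξ₁)) :
    ‖c₁ * ⟪ψ₀, W ψ₁⟫_ℂ‖ + ‖c₀ * ⟪ψ₁, W ψ₀⟫_ℂ‖ ≥ |Δ| := by
  have hZ_eq : Z = pauliZ ℂ K := funext fun v => hZ v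
  let T := V.symm.toLinearMap ∘ₗ pauliZ ℂ K ∘ₗ V.toLinearMap
  have hW_eq : W = T := by rw [hW, hZ_eq]; rfl
  have inner_T_self (φ : WithLp 2 (K × K)) : ⟪φ, T φ⟫_ℂ = ⟪V φ, pauliZ ℂ K (V φ)⟫_ℂ :=
    (V.inner_map_eq_flip φ _).symm
  have hplus : ⟪c₀ • ψ₀ + c₁ • ψ₁, T (c₀ • ψ₀ + c₁ • ψ₁)⟫_ℂ = ((1 - p - p : ℝ) : ℂ) := by
    rw [inner_T_self, hVp]
    exact inner_pauliZ_self_toLp (norm_sqrt_smul_sq (by linarith) hν₀) (norm_sqrt_smul_sq hp0 hν₁)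
  have hminus : ⟪c₀ • ψ₀ - c₁ • ψ₁, T (c₀ • ψ₀ - c₁ • ψ₁)⟫_ℂ
      = ((1 - p + Δ - (p - Δ) : ℝ) : ℂ) := by
    rw [inner_T_self, hVm]
    exact inner_pauliZ_self_toLp (norm_sqrt_smul_sq (by linarith) hξ₀) (norm_sqrt_smul_sq hpΔ0 hξ₁)
  have hbound := norm_inner_add_map_add_sub_inner_sub_map_sub_le T hc₀ hc₁ ψ₀ ψ₁
  rw [hplus, hminus, ← Complex.ofReal_sub, Complex.norm_real, Real.norm_eq_abs,
    show 1 - p - p - (1 - p + Δ - (p - Δ)) = -(2 * Δ) by ring, abs_neg, abs_mul, abs_two] at hbound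
  rw [hW_eq]
  linarith
end

section
/- Let E be an inner product space over ℂ, let x, y ∈ E satisfy ⟪x, y⟫ = 0, and let p : ℝ with p > 1. If ‖x + y‖² ≥ 1/(4p) and ‖y‖² ≤ 1/(4·p²¹), then x ≠ 0 and Real.sqrt (1 − ‖⟪(‖x‖⁻¹) • x, (‖x+y‖⁻¹) • (x+y)⟫‖²) ≤ 1/p¹⁰. (This is the quantitative core of Lemma 5.1: if the post-verification state is normalized from a vector of squared norm at least 1/(4p) whose component on invalid signature branches has squared norm at most 1/(4p²¹), then it is within trace distance 1/p¹⁰ of the state supported only on the two valid signature branches.) -/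
open scoped InnerProductSpace

/-- Quantitative core of Lemma 5.1: discarding an orthogonal error component of squared
norm at most `1/(4p²¹)` from a vector of squared norm at least `1/(4p)` moves the
normalized state by trace distance at most `1/p¹⁰`. -/
theorem stmt8 {E : Type*} [NormedAddCommGroup E] [InnerProductSpace ℂ E]
    (x y : E) (hxy : ⟪x, y⟫_ℂ = 0) (p : ℝ) (hp : 1 < p)
    (hbig : 1 / (4 * p) ≤ ‖x + y‖ ^ 2) (hsmall : ‖y‖ ^ 2 ≤ 1 / (4 * p ^ 21)) :
    x ≠ 0 ∧
      Real.sqrt (1 - ‖⟪(‖x‖⁻¹ : ℝ) • x, (‖x + y‖⁻¹ : ℝ) • (x + y)⟫_ℂ‖ ^ 2)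
        ≤ 1 / p ^ 10 := by
  have hp0 : 0 < p := lt_trans one_pos hp
  have hpyth : ‖x + y‖ ^ 2 = ‖x‖ ^ 2 + ‖y‖ ^ 2 := by
    have := @norm_add_sq ℂ _ _ _ _ x y
    rw [hxy] at this
    simpa using this
  have hsmalllt : ‖y‖ ^ 2 < 1 / (4 * p) := by
    refine lt_of_le_of_lt hsmall ?_
    apply div_lt_div_of_pos_left one_pos (by positivity)
    have : p < p ^ 21 := by
      calc p = p ^ 1 := (pow_one p).symm
      _ < p ^ 21 := pow_lt_pow_right₀ hp (by norm_num)
    nlinarith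
  have hx2 : 0 < ‖x‖ ^ 2 := by nlinarith
  have hx0 : x ≠ 0 := by
    intro h
    rw [h, norm_zero] at hx2
    simp at hx2
  have hxn : 0 < ‖x‖ := norm_pos_iff.mpr hx0
  have hb2 : 0 < ‖x + y‖ ^ 2 := by nlinarith
  have hbn : 0 < ‖x + y‖ := by nlinarith [norm_nonneg (x+y)]
  refine ⟨hx0, ?_⟩
  have hinner : ⟪x, x + y⟫_ℂ = (‖x‖ : ℂ) ^ 2 := by
    rw [inner_add_right, hxy, add_zero, inner_self_eq_norm_sq_to_K]
    norm_num
  have hnormval : ‖⟪(‖x‖⁻¹ : ℝ) • x, (‖x + y‖⁻¹ : ℝ) • (x + y)⟫_ℂ‖ = ‖x‖ / ‖x + y‖ := by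
    rw [RCLike.real_smul_eq_coe_smul (K := ℂ), RCLike.real_smul_eq_coe_smul (K := ℂ),
      inner_smul_left, inner_smul_right, hinner]
    simp only [norm_mul, RCLike.norm_conj, norm_pow, RCLike.norm_ofReal, Complex.norm_real,
      Real.norm_eq_abs]
    rw [abs_of_nonneg (by positivity : (0:ℝ) ≤ ‖x‖⁻¹),
      abs_of_nonneg (by positivity : (0:ℝ) ≤ ‖x+y‖⁻¹),
      abs_of_nonneg (le_of_lt hxn)]
    field_simp
  rw [hnormval]
  have hval : 1 - (‖x‖ / ‖x + y‖) ^ 2 = ‖y‖ ^ 2 / ‖x + y‖ ^ 2 := by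
    field_simp
    nlinarith
  rw [hval]
  have hle : ‖y‖ ^ 2 / ‖x + y‖ ^ 2 ≤ 1 / p ^ 20 := by
    rw [div_le_div_iff₀ hb2 (by positivity)]
    calc ‖y‖ ^ 2 * p ^ 20 ≤ (1 / (4 * p ^ 21)) * p ^ 20 := by
          apply mul_le_mul_of_nonneg_right hsmall (by positivity)
      _ = 1 / (4 * p) := by field_simp
      _ ≤ ‖x + y‖ ^ 2 := hbig
      _ = 1 * ‖x + y‖ ^ 2 := (one_mul _).symm
  calc Real.sqrt (‖y‖ ^ 2 / ‖x + y‖ ^ 2) ≤ Real.sqrt (1 / p ^ 20) :=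
        Real.sqrt_le_sqrt hle
    _ = 1 / p ^ 10 := by
        rw [show (20 : ℕ) = 10 * 2 by norm_num, pow_mul, one_div, Real.sqrt_inv,
          Real.sqrt_sq (by positivity), one_div]
end

section
/- For every natural number λ ≥ 1, 3^λ · Nat.choose (3·λ) (2·λ) ≤ 2^λ · Nat.choose (4·λ) (2·λ). (Equivalently: the probability that a uniformly random 2λ-element subset Test of a 4λ-element index set is disjoint from a fixed subset of λ bad indices is at most (2/3)^λ; this is the quantitative content of the claim that, in the cut-and-choose construction, if more than λ of the 4λ ciphertext components decrypt incorrectly then the decryption outputs ⊥ with overwhelming probability.) -/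
lemma aux_asc (m : ℕ) : ∀ k, k ≤ 3 * m →
    3 ^ k * (m + 1).ascFactorial k ≤ 2 ^ k * (3 * m + 1).ascFactorial k
  | 0, _ => le_refl _
  | k + 1, h => by
    rw [Nat.ascFactorial_succ, Nat.ascFactorial_succ, pow_succ, pow_succ]
    have h1 : 3 * (m + 1 + k) ≤ 2 * (3 * m + 1 + k) := by omega
    have h2 := aux_asc m k (by omega)
    calc 3 ^ k * 3 * ((m + 1 + k) * (m + 1).ascFactorial k)
        = (3 * (m + 1 + k)) * (3 ^ k * (m + 1).ascFactorial k) := by ring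
      _ ≤ (2 * (3 * m + 1 + k)) * (2 ^ k * (3 * m + 1).ascFactorial k) :=
          Nat.mul_le_mul h1 h2
      _ = 2 ^ k * 2 * ((3 * m + 1 + k) * (3 * m + 1).ascFactorial k) := by ring

/-- Cut-and-choose bound: `3^λ · C(3λ, 2λ) ≤ 2^λ · C(4λ, 2λ)`, i.e. a random `2λ`-subset
of `[4λ]` avoids a fixed `λ`-subset with probability at most `(2/3)^λ`. -/
theorem stmt12 (l : ℕ) (hl : 1 ≤ l) :
    3 ^ l * Nat.choose (3 * l) (2 * l) ≤ 2 ^ l * Nat.choose (4 * l) (2 * l) := by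
  -- key: 3^l * (3l).factorial * (2l).factorial ≤ 2^l * (4l).factorial * l!
  have key : 3 ^ l * (3 * l).factorial * (2 * l).factorial ≤ 2 ^ l * (4 * l).factorial * l.factorial := by
    have e1 : (3 * l).factorial * (3 * l + 1).ascFactorial l = (4 * l).factorial := by
      rw [Nat.factorial_mul_ascFactorial]; ring_nf
    have e2 : l.factorial * (l + 1).ascFactorial l = (2 * l).factorial := by
      rw [Nat.factorial_mul_ascFactorial]; ring_nf
    have h := aux_asc l l (by omega)
    calc 3 ^ l * (3 * l).factorial * (2 * l).factorial
        = ((3 * l).factorial * l.factorial) * (3 ^ l * (l + 1).ascFactorial l) := by rw [← e2]; ring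
      _ ≤ ((3 * l).factorial * l.factorial) * (2 ^ l * (3 * l + 1).ascFactorial l) :=
          Nat.mul_le_mul_left _ h
      _ = 2 ^ l * (4 * l).factorial * l.factorial := by rw [← e1]; ring
  have hpos : 0 < (2 * l).factorial * l.factorial * (2 * l).factorial := by positivity
  apply Nat.le_of_mul_le_mul_right _ hpos
  · have c1 : Nat.choose (3 * l) (2 * l) * (2 * l).factorial * l.factorial = (3 * l).factorial := by
      have := Nat.choose_mul_factorial_mul_factorial (show 2 * l ≤ 3 * l by omega)
      have h3 : 3 * l - 2 * l = l := by omega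
      rw [h3] at this; exact this
    have c2 : Nat.choose (4 * l) (2 * l) * (2 * l).factorial * (2 * l).factorial = (4 * l).factorial := by
      have := Nat.choose_mul_factorial_mul_factorial (show 2 * l ≤ 4 * l by omega)
      have h4 : 4 * l - 2 * l = 2 * l := by omega
      rw [h4] at this; exact this
    calc 3 ^ l * Nat.choose (3 * l) (2 * l) * ((2 * l).factorial * l.factorial * (2 * l).factorial)
        = 3 ^ l * (Nat.choose (3 * l) (2 * l) * (2 * l).factorial * l.factorial) * (2 * l).factorial := by ring
      _ = 3 ^ l * (3 * l).factorial * (2 * l).factorial := by rw [c1]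
      _ ≤ 2 ^ l * (4 * l).factorial * l.factorial := key
      _ = 2 ^ l * (Nat.choose (4 * l) (2 * l) * (2 * l).factorial * (2 * l).factorial) * l.factorial := by rw [c2]
      _ = 2 ^ l * Nat.choose (4 * l) (2 * l) * ((2 * l).factorial * l.factorial * (2 * l).factorial) := by ring
end
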